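/- There is a universal constant C > 0 such that for every pure strategy S for G_Rad^{(n)} and every ε ∈ {−1,1}^{n×n}: ( Σ_{i,j=1}^n N(∂_{ij} Φ^{ii}_S(ε))² )^{1/2} ≤ ( Σ_{i,j=1}^n (1/4)·‖ (Id_{ℂ^k} ⊗ (W_ε − W_{ε̄^{ij}})) φ ‖² )^{1/2} + C/n, where ε̄^{ij} denotes ε with its (i,j) entry flipped and the norm on the right-hand side is the Euclidean norm on ℂ^k ⊗ ℂ^{k̃}. -/

import Mathlib

open scoped BigOperators

noncomputable section

abbrev ES (ι : Type) := EuclideanSpace ℂ ι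

def sgn (b : Bool) : ℂ := if b then 1 else -1

def sgnR (b : Bool) : ℝ := if b then 1 else -1

/-- Uniform average of a real-valued function over a finite type. -/
def Eavg {α : Type} [Fintype α] (f : α → ℝ) : ℝ := (∑ x, f x) / (Fintype.card α : ℝ)

/-- Uniform average of a vector-valued function over a finite type. -/
def EavgV {α : Type} [Fintype α] {X : Type} [AddCommGroup X] [Module ℂ X] (f : α → X) : X :=
  (Fintype.card α : ℂ)⁻¹ • ∑ x, f x

/-- The matrix of a continuous linear map between Euclidean spaces. -/
def matOf {ι κ : Type} [Fintype ι] [Fintype κ] [DecidableEq ι] (f : ES ι →L[ℂ] ES κ) :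
    Matrix κ ι ℂ := Matrix.toEuclideanLin.symm (f : ES ι →ₗ[ℂ] ES κ)

/-- The continuous linear map between Euclidean spaces given by a matrix. -/
def ofMat {ι κ : Type} [Fintype ι] [Fintype κ] [DecidableEq ι] (M : Matrix κ ι ℂ) :
    ES ι →L[ℂ] ES κ := LinearMap.toContinuousLinearMap (Matrix.toEuclideanLin M)

/-- Tensor product of two (continuous) linear maps between Euclidean spaces, realized
via the Kronecker product of their matrices. -/
def tensorCLM {ι₁ ι₂ κ₁ κ₂ : Type} [Fintype ι₁] [Fintype ι₂] [Fintype κ₁] [Fintype κ₂]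
    [DecidableEq ι₁] [DecidableEq ι₂]
    (f : ES ι₁ →L[ℂ] ES κ₁) (g : ES ι₂ →L[ℂ] ES κ₂) :
    ES (ι₁ × ι₂) →L[ℂ] ES (κ₁ × κ₂) :=
  ofMat (Matrix.kroneckerMap (· * ·) (matOf f) (matOf g))

/-- The isometry `ℂ^k → ℂ^n ⊗ ℂ^n ⊗ ℂ^k`, `x ↦ e_i ⊗ e_j ⊗ x`. -/
def embedAB {n k : ℕ} (i j : Fin n) : ES (Fin k) →L[ℂ] ES (Fin n × Fin n × Fin k) :=
  ofMat (Matrix.of fun p c => if p.1 = i ∧ p.2.1 = j ∧ p.2.2 = c then 1 else 0)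

/-- `V|ij⟩ : ℂ^k → ℂ^{k̃}`, the map `x ↦ V(e_i ⊗ e_j ⊗ x)`. -/
def Vij {n k k' : ℕ} (V : ES (Fin n × Fin n × Fin k) →L[ℂ] ES (Fin k')) (i j : Fin n) :
    ES (Fin k) →L[ℂ] ES (Fin k') := V.comp (embedAB i j)

/-- `e_i^* ⊗ Id : ℂ^n ⊗ ℂ^r → ℂ^r`. -/
def proj {n r : ℕ} (i : Fin n) : ES (Fin n × Fin r) →L[ℂ] ES (Fin r) :=
  ofMat (Matrix.of fun s p => if p.1 = i ∧ p.2 = s then 1 else 0)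

/-- A pure strategy for the game `G_Rad^{(n)}` with dimensions `k, k', r`. -/
structure PureStrategy (n k k' r : ℕ) where
  V : ES (Fin n × Fin n × Fin k) →L[ℂ] ES (Fin k')
  W : ((Fin n × Fin n) → Bool) → ES (Fin k) →L[ℂ] ES (Fin k')
  Vt : ((Fin n × Fin n) → Bool) → ES (Fin k') →L[ℂ] ES (Fin n × Fin r)
  Wt : ((Fin n × Fin n) → Bool) → ES (Fin k') →L[ℂ] ES (Fin n × Fin r)
  φ : ES (Fin k × Fin k)
  hV : ‖V‖ ≤ 1
  hW : ∀ ε, ‖W ε‖ ≤ 1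
  hVt : ∀ ε, ‖Vt ε‖ ≤ 1
  hWt : ∀ ε, ‖Wt ε‖ ≤ 1
  hφ : ‖φ‖ = 1

/-- The value `ω(S)` of a pure strategy in `G_Rad^{(n)}`. -/
def value {n k k' r : ℕ} (S : PureStrategy n k k' r) : ℝ :=
  Eavg fun ε => ‖((n : ℂ) ^ 2)⁻¹ • ∑ ij : Fin n × Fin n, sgn (ε ij) •
    (tensorCLM ((proj ij.1).comp (S.Vt ε)) ((proj ij.2).comp (S.Wt ε)))
      ((tensorCLM (Vij S.V ij.1 ij.2) (S.W ε)) S.φ)‖ ^ 2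

/-- The assignment `Φ^i_S : {−1,1}^{n×n} → B(ℂ^k ⊗ ℂ^{k̃}, ℂ^r ⊗ ℂ^r)`. -/
def PhiI {n k k' r : ℕ} (S : PureStrategy n k k' r) (ε : (Fin n × Fin n) → Bool) :
    ES (Fin k × Fin k') →L[ℂ] ES (Fin r × Fin r) :=
  ((n : ℂ) ^ 2)⁻¹ • ∑ ij : Fin n × Fin n, sgn (ε ij) •
    ((tensorCLM ((proj ij.1).comp (S.Vt ε)) ((proj ij.2).comp (S.Wt ε))).comp
      (tensorCLM (Vij S.V ij.1 ij.2) (ContinuousLinearMap.id ℂ (ES (Fin k')))))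

/-- Flip the `p`-th sign of `ε`. -/
def flipAt {ι : Type} [DecidableEq ι] (ε : ι → Bool) (p : ι) : ι → Bool :=
  Function.update ε p (!(ε p))

/-- The regularity parameter `σ_Φ` of a map on the Boolean hypercube with values in a
normed space; `‖∂_pΦ(ε)‖ = ‖Φ(ε) − Φ(ε̄^p)‖/2`. -/
def sigma {ι : Type} [Fintype ι] [DecidableEq ι] {X : Type} [NormedAddCommGroup X]
    (Φ : (ι → Bool) → X) : ℝ :=
  Real.log (Fintype.card ι) *
    Eavg fun ε => Real.sqrt (∑ p : ι, (‖Φ ε - Φ (flipAt ε p)‖ / 2) ^ 2)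

/-- The type-2 constant with `m` vectors of a normed space. -/
def T2With (m : ℕ) (X : Type) [NormedAddCommGroup X] [NormedSpace ℝ X] : ℝ :=
  sInf {T : ℝ | 0 ≤ T ∧ ∀ x : Fin m → X,
    Real.sqrt (Eavg fun ε : Fin m → Bool => ‖∑ i, sgnR (ε i) • x i‖ ^ 2)
      ≤ T * Real.sqrt (∑ i, ‖x i‖ ^ 2)}

/-- `ĥ : ℂ^n ⊗ ℂ^{k̃} → ℂ^{r'}` determined by `ĥ(e_i ⊗ y) = (e_i^* ⊗ Id)(h y)`. -/
def hat {n k' r' : ℕ} (h : ES (Fin k') →L[ℂ] ES (Fin n × Fin r')) :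
    ES (Fin n × Fin k') →L[ℂ] ES (Fin r') :=
  ofMat (Matrix.of fun s p => matOf h (p.1, s) p.2)

/-- The norm `N` on `(ℂ^n ⊗ ℂ^{k̃}) ⊗ (ℂ^n ⊗ ℂ^{k̃})`. -/
def Nnorm {n k' : ℕ} (t : ES ((Fin n × Fin k') × (Fin n × Fin k'))) : ℝ :=
  sSup {s : ℝ | ∃ (r' : ℕ) (h g : ES (Fin k') →L[ℂ] ES (Fin n × Fin r')),
    ‖h‖ ≤ 1 ∧ ‖g‖ ≤ 1 ∧ s = ‖(tensorCLM (hat h) (hat g)) t‖}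

/-- `v ↦ e_i ⊗ e_j ⊗ v`, reordered into `(ℂ^n ⊗ ℂ^{k̃}) ⊗ (ℂ^n ⊗ ℂ^{k̃})`. -/
def embedPair {n k' : ℕ} (i j : Fin n) :
    ES (Fin k' × Fin k') →L[ℂ] ES ((Fin n × Fin k') × (Fin n × Fin k')) :=
  ofMat (Matrix.of fun p q => if p.1.1 = i ∧ p.2.1 = j ∧ p.1.2 = q.1 ∧ p.2.2 = q.2 then 1 else 0)

/-- The assignment `Φ^{ii}_S : {−1,1}^{n×n} → (ℂ^n ⊗ ℂ^{k̃}) ⊗ (ℂ^n ⊗ ℂ^{k̃})`. -/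
def PhiII {n k k' r : ℕ} (S : PureStrategy n k k' r) (ε : (Fin n × Fin n) → Bool) :
    ES ((Fin n × Fin k') × (Fin n × Fin k')) :=
  ((n : ℂ) ^ 2)⁻¹ • ∑ ij : Fin n × Fin n, sgn (ε ij) •
    embedPair ij.1 ij.2 ((tensorCLM (Vij S.V ij.1 ij.2) (S.W ε)) S.φ)

/-!
Write `Φ^{ii}_S(ε) = n⁻² Σ_{ab} ε_{ab} t_{ab}(ε)` with `t_{ab}(η) = e_a ⊗ e_b ⊗ (V|ab⟩ ⊗ W_η)φ`.
The key identity is `(ĥ ⊗ ĝ)(e_a ⊗ e_b ⊗ v) = ((e_a^* ⊗ Id) h ⊗ (e_b^* ⊗ Id) g) v`: a contraction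
applied to `v`. Hence each `‖(ĥ ⊗ ĝ) t_{ab}(η)‖ ≤ 1`, and since `V|ab⟩ ⊗ Id` is a contraction too,
`‖(ĥ ⊗ ĝ)(t_{ab}(ε) - t_{ab}(ε̄^p))‖ ≤ ‖(Id ⊗ (W_ε - W_{ε̄^p}))φ‖`. Flipping `ε_p` changes every
summand `ab ≠ p` by such a difference and the summand `p` by at most `2`, so the triangle
inequality gives `N(∂_pΦ^{ii}_S(ε)) ≤ ½‖(Id ⊗ (W_ε - W_{ε̄^p}))φ‖ + 1/n²`; Minkowski's inequality
in `ℓ²(n × n)` then yields the claim with `C = 1`.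
-/

lemma sqrt_sum_sq_add_le {α : Type} [Fintype α] (u v : α → ℝ) :
    √(∑ i, (u i + v i) ^ 2) ≤ √(∑ i, u i ^ 2) + √(∑ i, v i ^ 2) := by
  simpa [EuclideanSpace.norm_eq] using
    norm_add_le (WithLp.toLp 2 u : EuclideanSpace ℝ α) (WithLp.toLp 2 v)

lemma sqrt_sum_inv_sq_sq (n : ℕ) : √(∑ _ : Fin n × Fin n, (((n : ℝ) ^ 2)⁻¹) ^ 2) = 1 / n := by
  rcases eq_or_ne n 0 with rfl | hn
  · simp
  · rw [Finset.sum_const, Finset.card_univ, Fintype.card_prod, Fintype.card_fin, nsmul_eq_mul,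
      ← Real.sqrt_sq (by positivity : (0 : ℝ) ≤ 1 / n)]
    congr 1
    field_simp
    push_cast
    ring

lemma opNorm_comp_le_one {X Y Z : Type*} [SeminormedAddCommGroup X] [SeminormedAddCommGroup Y]
    [SeminormedAddCommGroup Z] [NormedSpace ℂ X] [NormedSpace ℂ Y] [NormedSpace ℂ Z]
    {A : Y →L[ℂ] Z} {B : X →L[ℂ] Y} (hA : ‖A‖ ≤ 1) (hB : ‖B‖ ≤ 1) : ‖A.comp B‖ ≤ 1 :=
  (ContinuousLinearMap.opNorm_comp_le A B).trans (mul_le_one₀ hA (norm_nonneg B) hB)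

section MatrixCalculus

variable {ι κ μ : Type} [Fintype ι] [Fintype κ] [DecidableEq ι]

lemma ofMat_apply (M : Matrix κ ι ℂ) (x : ES ι) (p : κ) : ofMat M x p = ∑ j, M p j * x j := by
  simp [ofMat, Matrix.toLpLin_apply, Matrix.mulVec, dotProduct]

lemma matOf_ofMat (M : Matrix κ ι ℂ) : matOf (ofMat M) = M := by
  simp [matOf, ofMat]

lemma ofMat_matOf (f : ES ι →L[ℂ] ES κ) : ofMat (matOf f) = f := by
  apply ContinuousLinearMap.coe_injective
  simp [matOf, ofMat]

lemma apply_eq_sum_matOf (f : ES ι →L[ℂ] ES κ) (x : ES ι) (p : κ) :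
    f x p = ∑ c, matOf f p c * x c := by
  conv_lhs => rw [← ofMat_matOf f]
  rw [ofMat_apply]

lemma ofMat_injective : Function.Injective (ofMat : Matrix κ ι ℂ → ES ι →L[ℂ] ES κ) :=
  Function.LeftInverse.injective matOf_ofMat

lemma ofMat_mul [Fintype μ] [DecidableEq μ] (M : Matrix κ μ ℂ) (N : Matrix μ ι ℂ) :
    ofMat (M * N) = (ofMat M).comp (ofMat N) := by
  apply ContinuousLinearMap.coe_injective
  simp [ofMat]

lemma matOf_comp [Fintype μ] [DecidableEq μ] (f : ES μ →L[ℂ] ES κ) (g : ES ι →L[ℂ] ES μ) :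
    matOf (f.comp g) = matOf f * matOf g :=
  ofMat_injective <| by rw [ofMat_mul, ofMat_matOf, ofMat_matOf, ofMat_matOf]

lemma matOf_id : matOf (ContinuousLinearMap.id ℂ (ES ι)) = 1 := by
  simp [matOf]

lemma matOf_sub (f g : ES ι →L[ℂ] ES κ) : matOf (f - g) = matOf f - matOf g :=
  map_sub Matrix.toEuclideanLin.symm (f : ES ι →ₗ[ℂ] ES κ) g

end MatrixCalculus

section Tensor

variable {ι₁ ι₂ κ₁ κ₂ μ₁ μ₂ : Type} [Fintype ι₁] [Fintype ι₂] [Fintype κ₁] [Fintype κ₂]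
  [DecidableEq ι₁] [DecidableEq ι₂]

lemma tensorCLM_comp [Fintype μ₁] [Fintype μ₂] [DecidableEq μ₁] [DecidableEq μ₂]
    (f₁ : ES μ₁ →L[ℂ] ES κ₁) (f₂ : ES ι₁ →L[ℂ] ES μ₁)
    (g₁ : ES μ₂ →L[ℂ] ES κ₂) (g₂ : ES ι₂ →L[ℂ] ES μ₂) :
    tensorCLM (f₁.comp f₂) (g₁.comp g₂) = (tensorCLM f₁ g₁).comp (tensorCLM f₂ g₂) := by
  rw [tensorCLM, tensorCLM, tensorCLM, matOf_comp, matOf_comp, ← ofMat_mul,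
    Matrix.mul_kronecker_mul]

lemma tensorCLM_sub_right (f : ES ι₁ →L[ℂ] ES κ₁) (g₁ g₂ : ES ι₂ →L[ℂ] ES κ₂) :
    tensorCLM f (g₁ - g₂) = tensorCLM f g₁ - tensorCLM f g₂ := by
  simp only [tensorCLM, matOf_sub, ofMat, ← map_sub]
  congr 2
  ext
  simp [mul_sub]

lemma tensorCLM_apply (f : ES ι₁ →L[ℂ] ES κ₁) (g : ES ι₂ →L[ℂ] ES κ₂) (x : ES (ι₁ × ι₂))
    (p : κ₁ × κ₂) : tensorCLM f g x p = ∑ c, ∑ d, matOf f p.1 c * matOf g p.2 d * x (c, d) := by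
  rw [tensorCLM, ofMat_apply, Fintype.sum_prod_type]
  simp [Matrix.kroneckerMap_apply]

end Tensor

section Slices

variable {ι₁ ι₂ κ₁ κ₂ : Type} [Fintype ι₁] [Fintype ι₂] [Fintype κ₁] [Fintype κ₂]

def sliceFst (x : ES (ι₁ × ι₂)) (c : ι₁) : ES ι₂ := WithLp.toLp 2 fun d => x (c, d)

def sliceSnd (x : ES (ι₁ × ι₂)) (d : ι₂) : ES ι₁ := WithLp.toLp 2 fun c => x (c, d)

lemma sq_norm_eq_sum_sliceFst (x : ES (ι₁ × ι₂)) : ‖x‖ ^ 2 = ∑ c, ‖sliceFst x c‖ ^ 2 := by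
  simp [EuclideanSpace.norm_sq_eq, sliceFst, Fintype.sum_prod_type]

lemma sq_norm_eq_sum_sliceSnd (x : ES (ι₁ × ι₂)) : ‖x‖ ^ 2 = ∑ d, ‖sliceSnd x d‖ ^ 2 := by
  simp [EuclideanSpace.norm_sq_eq, sliceSnd, Fintype.sum_prod_type_right]

variable [DecidableEq ι₁] [DecidableEq ι₂]

lemma sliceSnd_tensorCLM_id (f : ES ι₁ →L[ℂ] ES κ₁) (x : ES (ι₁ × ι₂)) (d : ι₂) :
    sliceSnd (tensorCLM f (.id ℂ (ES ι₂)) x) d = f (sliceSnd x d) := by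
  ext p
  simp [sliceSnd, tensorCLM_apply, apply_eq_sum_matOf f, matOf_id, Matrix.one_apply]

lemma sliceFst_tensorCLM_id (g : ES ι₂ →L[ℂ] ES κ₂) (x : ES (ι₁ × ι₂)) (c : ι₁) :
    sliceFst (tensorCLM (.id ℂ (ES ι₁)) g x) c = g (sliceFst x c) := by
  ext q
  simp [sliceFst, tensorCLM_apply, apply_eq_sum_matOf g, matOf_id, Matrix.one_apply]

end Slices

section TensorNorm

variable {ι₁ ι₂ κ₁ κ₂ : Type} [Fintype ι₁] [Fintype ι₂] [Fintype κ₁] [Fintype κ₂]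
  [DecidableEq ι₁] [DecidableEq ι₂]

lemma norm_tensorCLM_id_apply_le (f : ES ι₁ →L[ℂ] ES κ₁) (x : ES (ι₁ × ι₂)) :
    ‖tensorCLM f (.id ℂ (ES ι₂)) x‖ ≤ ‖f‖ * ‖x‖ := by
  refine (pow_le_pow_iff_left₀ (norm_nonneg _) (by positivity) two_ne_zero).1 ?_
  rw [mul_pow, sq_norm_eq_sum_sliceSnd, sq_norm_eq_sum_sliceSnd x, Finset.mul_sum]
  gcongr with d
  rw [sliceSnd_tensorCLM_id, ← mul_pow]
  exact pow_le_pow_left₀ (norm_nonneg _) (f.le_opNorm _) 2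

lemma norm_id_tensorCLM_apply_le (g : ES ι₂ →L[ℂ] ES κ₂) (x : ES (ι₁ × ι₂)) :
    ‖tensorCLM (.id ℂ (ES ι₁)) g x‖ ≤ ‖g‖ * ‖x‖ := by
  refine (pow_le_pow_iff_left₀ (norm_nonneg _) (by positivity) two_ne_zero).1 ?_
  rw [mul_pow, sq_norm_eq_sum_sliceFst, sq_norm_eq_sum_sliceFst x, Finset.mul_sum]
  gcongr with c
  rw [sliceFst_tensorCLM_id, ← mul_pow]
  exact pow_le_pow_left₀ (norm_nonneg _) (g.le_opNorm _) 2

lemma opNorm_tensorCLM_le [DecidableEq κ₂] (f : ES ι₁ →L[ℂ] ES κ₁) (g : ES ι₂ →L[ℂ] ES κ₂) :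
    ‖tensorCLM f g‖ ≤ ‖f‖ * ‖g‖ := by
  refine ContinuousLinearMap.opNorm_le_bound _ (by positivity) fun x => ?_
  have hsplit :
      tensorCLM f g = (tensorCLM f (.id ℂ (ES κ₂))).comp (tensorCLM (.id ℂ (ES ι₁)) g) := by
    rw [← tensorCLM_comp, f.comp_id, g.id_comp]
  calc ‖tensorCLM f g x‖ ≤ ‖f‖ * ‖tensorCLM (.id ℂ (ES ι₁)) g x‖ := by
        rw [hsplit, ContinuousLinearMap.comp_apply]; exact norm_tensorCLM_id_apply_le f _
    _ ≤ ‖f‖ * (‖g‖ * ‖x‖) := by gcongr; exact norm_id_tensorCLM_apply_le g x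
    _ = ‖f‖ * ‖g‖ * ‖x‖ := (mul_assoc _ _ _).symm

lemma opNorm_tensorCLM_le_one [DecidableEq κ₂] {f : ES ι₁ →L[ℂ] ES κ₁} {g : ES ι₂ →L[ℂ] ES κ₂}
    (hf : ‖f‖ ≤ 1) (hg : ‖g‖ ≤ 1) : ‖tensorCLM f g‖ ≤ 1 :=
  (opNorm_tensorCLM_le f g).trans (mul_le_one₀ hf (norm_nonneg g) hg)

end TensorNorm

section Contractions

variable {n k k' r : ℕ}

lemma proj_apply_eq_sliceFst (i : Fin n) (x : ES (Fin n × Fin r)) : proj i x = sliceFst x i := by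
  ext s
  simp [proj, ofMat_apply, sliceFst, Fintype.sum_prod_type, ite_and]

lemma opNorm_proj_le_one (i : Fin n) : ‖(proj i : ES (Fin n × Fin r) →L[ℂ] ES (Fin r))‖ ≤ 1 := by
  refine ContinuousLinearMap.opNorm_le_bound _ zero_le_one fun x => ?_
  refine (pow_le_pow_iff_left₀ (norm_nonneg _) (by positivity) two_ne_zero).1 ?_
  rw [one_mul, proj_apply_eq_sliceFst, sq_norm_eq_sum_sliceFst x]
  exact Finset.single_le_sum (f := fun c => ‖sliceFst x c‖ ^ 2) (fun _ _ => by positivity)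
    (Finset.mem_univ i)

lemma norm_embedAB_apply (i j : Fin n) (x : ES (Fin k)) : ‖embedAB i j x‖ = ‖x‖ := by
  refine (pow_left_inj₀ (norm_nonneg _) (norm_nonneg _) two_ne_zero).1 ?_
  simp [EuclideanSpace.norm_sq_eq, embedAB, ofMat_apply, apply_ite, ite_and,
    Fintype.sum_prod_type]

lemma opNorm_Vij_le (V : ES (Fin n × Fin n × Fin k) →L[ℂ] ES (Fin k')) (i j : Fin n) :
    ‖Vij V i j‖ ≤ ‖V‖ :=
  ContinuousLinearMap.opNorm_le_bound _ (norm_nonneg V) fun x => by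
    simpa [Vij, norm_embedAB_apply] using V.le_opNorm (embedAB i j x)

end Contractions

lemma matOf_proj_comp {n k' r : ℕ} (i : Fin n) (h : ES (Fin k') →L[ℂ] ES (Fin n × Fin r)) :
    matOf ((proj i).comp h) = Matrix.of fun s y => matOf h (i, s) y := by
  ext s y
  simp [matOf_comp, proj, matOf_ofMat, Matrix.mul_apply, Fintype.sum_prod_type, ite_and]

lemma tensorCLM_hat_comp_embedPair {n k' r : ℕ} (h g : ES (Fin k') →L[ℂ] ES (Fin n × Fin r))
    (i j : Fin n) :
    (tensorCLM (hat h) (hat g)).comp (embedPair i j)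
      = tensorCLM ((proj i).comp h) ((proj j).comp g) := by
  rw [tensorCLM, tensorCLM, embedPair, ← ofMat_mul, matOf_proj_comp, matOf_proj_comp]
  congr 1
  ext p q
  simp [hat, matOf_ofMat, Matrix.mul_apply, Matrix.kroneckerMap_apply, Fintype.sum_prod_type,
    ite_and]

lemma norm_hat_tensorCLM_embedPair_le {n k k' r : ℕ}
    {V : ES (Fin n × Fin n × Fin k) →L[ℂ] ES (Fin k')} (hV : ‖V‖ ≤ 1)
    {h g : ES (Fin k') →L[ℂ] ES (Fin n × Fin r)} (hh : ‖h‖ ≤ 1) (hg : ‖g‖ ≤ 1)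
    (a b : Fin n) (X : ES (Fin k) →L[ℂ] ES (Fin k')) (φ : ES (Fin k × Fin k)) :
    ‖tensorCLM (hat h) (hat g) (embedPair a b (tensorCLM (Vij V a b) X φ))‖
      ≤ ‖tensorCLM (.id ℂ (ES (Fin k))) X φ‖ := by
  set M := (tensorCLM ((proj a).comp h) ((proj b).comp g)).comp
    (tensorCLM (Vij V a b) (.id ℂ (ES (Fin k'))))
  have hM : ‖M‖ ≤ 1 :=
    opNorm_comp_le_one
      (opNorm_tensorCLM_le_one (opNorm_comp_le_one (opNorm_proj_le_one a) hh)
        (opNorm_comp_le_one (opNorm_proj_le_one b) hg))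
      (opNorm_tensorCLM_le_one ((opNorm_Vij_le V a b).trans hV) ContinuousLinearMap.norm_id_le)
  have hfactor : tensorCLM (hat h) (hat g) (embedPair a b (tensorCLM (Vij V a b) X φ))
      = M (tensorCLM (.id ℂ (ES (Fin k))) X φ) := by
    have hsplit : tensorCLM (Vij V a b) X = (tensorCLM (Vij V a b) (.id ℂ (ES (Fin k')))).comp
        (tensorCLM (.id ℂ (ES (Fin k))) X) := by
      rw [← tensorCLM_comp, ContinuousLinearMap.comp_id, ContinuousLinearMap.id_comp]
    simp only [hsplit, M, ← tensorCLM_hat_comp_embedPair]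
    rfl
  rw [hfactor]
  exact (M.le_opNorm _).trans (mul_le_of_le_one_left (norm_nonneg _) hM)

lemma Nnorm_nonneg {n k' : ℕ} (t : ES ((Fin n × Fin k') × (Fin n × Fin k'))) : 0 ≤ Nnorm t :=
  Real.sSup_nonneg fun _ ⟨_, _, _, _, _, hs⟩ => hs ▸ norm_nonneg _

lemma Nnorm_le {n k' : ℕ} {t : ES ((Fin n × Fin k') × (Fin n × Fin k'))} {B : ℝ} (hB : 0 ≤ B)
    (hbound : ∀ (r : ℕ) (h g : ES (Fin k') →L[ℂ] ES (Fin n × Fin r)), ‖h‖ ≤ 1 → ‖g‖ ≤ 1 →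
      ‖tensorCLM (hat h) (hat g) t‖ ≤ B) :
    Nnorm t ≤ B :=
  Real.sSup_le (by rintro s ⟨r, h, g, hh, hg, rfl⟩; exact hbound r h g hh hg) hB

lemma norm_sgn (b : Bool) : ‖sgn b‖ = 1 := by cases b <;> simp [sgn]

lemma sgn_not (b : Bool) : sgn (!b) = -sgn b := by cases b <;> simp [sgn]

namespace PureStrategy

variable {n k k' r r' : ℕ} (S : PureStrategy n k k' r)
  {h g : ES (Fin k') →L[ℂ] ES (Fin n × Fin r')}

def phiIITerm (η : (Fin n × Fin n) → Bool) (ab : Fin n × Fin n) :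
    ES ((Fin n × Fin k') × (Fin n × Fin k')) :=
  embedPair ab.1 ab.2 (tensorCLM (Vij S.V ab.1 ab.2) (S.W η) S.φ)

lemma PhiII_eq_smul_sum (ε : (Fin n × Fin n) → Bool) :
    PhiII S ε = ((n : ℂ) ^ 2)⁻¹ • ∑ ab, sgn (ε ab) • S.phiIITerm ε ab :=
  rfl

lemma phiIITerm_sub (η η' : (Fin n × Fin n) → Bool) (ab : Fin n × Fin n) :
    S.phiIITerm η ab - S.phiIITerm η' ab
      = embedPair ab.1 ab.2 (tensorCLM (Vij S.V ab.1 ab.2) (S.W η - S.W η') S.φ) := by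
  rw [phiIITerm, phiIITerm, ← map_sub, tensorCLM_sub_right, sub_apply]

lemma norm_hat_tensorCLM_phiIITerm_le_one (hh : ‖h‖ ≤ 1) (hg : ‖g‖ ≤ 1)
    (η : (Fin n × Fin n) → Bool) (ab : Fin n × Fin n) :
    ‖tensorCLM (hat h) (hat g) (S.phiIITerm η ab)‖ ≤ 1 := by
  refine (norm_hat_tensorCLM_embedPair_le S.hV hh hg _ _ _ _).trans ?_
  refine ((ContinuousLinearMap.le_opNorm _ _).trans ?_)
  rw [S.hφ, mul_one]
  exact opNorm_tensorCLM_le_one ContinuousLinearMap.norm_id_le (S.hW η)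

lemma norm_hat_tensorCLM_flipAt_sub_le (hh : ‖h‖ ≤ 1) (hg : ‖g‖ ≤ 1)
    (ε : (Fin n × Fin n) → Bool) (p ab : Fin n × Fin n) :
    ‖tensorCLM (hat h) (hat g)
        (sgn (ε ab) • S.phiIITerm ε ab - sgn (flipAt ε p ab) • S.phiIITerm (flipAt ε p) ab)‖
      ≤ ‖tensorCLM (.id ℂ (ES (Fin k))) (S.W ε - S.W (flipAt ε p)) S.φ‖
        + if ab = p then 2 else 0 := by
  by_cases hab : ab = p
  · subst hab
    have hflip : flipAt ε ab ab = !ε ab := Function.update_self _ _ _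
    rw [hflip, sgn_not, neg_smul, sub_neg_eq_add, ← smul_add, map_smul,
      norm_smul, norm_sgn, one_mul, map_add, if_pos rfl]
    calc _ ≤ ‖tensorCLM (hat h) (hat g) (S.phiIITerm ε ab)‖
          + ‖tensorCLM (hat h) (hat g) (S.phiIITerm (flipAt ε ab) ab)‖ := norm_add_le _ _
      _ ≤ 1 + 1 := add_le_add (S.norm_hat_tensorCLM_phiIITerm_le_one hh hg _ _)
          (S.norm_hat_tensorCLM_phiIITerm_le_one hh hg _ _)
      _ ≤ _ := by rw [one_add_one_eq_two]; exact le_add_of_nonneg_left (norm_nonneg _)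
  · have hflip : flipAt ε p ab = ε ab := Function.update_of_ne hab _ _
    rw [hflip, ← smul_sub, map_smul, norm_smul, norm_sgn, one_mul,
      if_neg hab, add_zero, phiIITerm_sub]
    exact norm_hat_tensorCLM_embedPair_le S.hV hh hg _ _ _ _

theorem Nnorm_half_PhiII_sub_flipAt_le (ε : (Fin n × Fin n) → Bool) (p : Fin n × Fin n) :
    Nnorm ((2 : ℂ)⁻¹ • (PhiII S ε - PhiII S (flipAt ε p)))
      ≤ 2⁻¹ * ‖tensorCLM (.id ℂ (ES (Fin k))) (S.W ε - S.W (flipAt ε p)) S.φ‖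
        + ((n : ℝ) ^ 2)⁻¹ := by
  have hn : (n : ℝ) ≠ 0 := Nat.cast_ne_zero.2 (Fin.pos p.1).ne'
  set B := ‖tensorCLM (.id ℂ (ES (Fin k))) (S.W ε - S.W (flipAt ε p)) S.φ‖
  refine Nnorm_le (by positivity) fun r' h g hh hg => ?_
  set T := tensorCLM (hat h) (hat g)
  have hsum : ‖∑ ab, T (sgn (ε ab) • S.phiIITerm ε ab
      - sgn (flipAt ε p ab) • S.phiIITerm (flipAt ε p) ab)‖ ≤ n ^ 2 * B + 2 :=
    calc _ ≤ ∑ ab : Fin n × Fin n, (B + if ab = p then 2 else 0) :=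
          norm_sum_le_of_le _ fun ab _ => S.norm_hat_tensorCLM_flipAt_sub_le hh hg ε p ab
      _ = n ^ 2 * B + 2 := by simp [Finset.sum_add_distrib, sq]
  calc ‖T ((2 : ℂ)⁻¹ • (PhiII S ε - PhiII S (flipAt ε p)))‖
      = 2⁻¹ * (((n : ℝ) ^ 2)⁻¹ * ‖∑ ab, T (sgn (ε ab) • S.phiIITerm ε ab
          - sgn (flipAt ε p ab) • S.phiIITerm (flipAt ε p) ab)‖) := by
        rw [PhiII_eq_smul_sum, PhiII_eq_smul_sum, ← smul_sub, ← Finset.sum_sub_distrib, map_smul,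
          map_smul, map_sum, norm_smul, norm_smul]
        simp
    _ ≤ 2⁻¹ * (((n : ℝ) ^ 2)⁻¹ * (n ^ 2 * B + 2)) := by gcongr
    _ = 2⁻¹ * B + ((n : ℝ) ^ 2)⁻¹ := by field_simp

end PureStrategy

/-- there is a universal constant `C > 0` such that for every pure strategy
`S` for `G_Rad^{(n)}` and every sign matrix `ε`:
`(Σ_{ij} N(∂_{ij}Φ^{ii}_S(ε))²)^{1/2}
  ≤ (Σ_{ij} (1/4)·‖(Id ⊗ (W_ε − W_{ε̄^{ij}}))φ‖²)^{1/2} + C/n`. -/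
theorem statement15 :
    ∃ C : ℝ, 0 < C ∧
      ∀ (n k k' r : ℕ), 2 ≤ n → 1 ≤ k → 1 ≤ k' → 1 ≤ r →
        ∀ (S : PureStrategy n k k' r) (ε : (Fin n × Fin n) → Bool),
          Real.sqrt (∑ ij : Fin n × Fin n,
              Nnorm ((2 : ℂ)⁻¹ • (PhiII S ε - PhiII S (flipAt ε ij))) ^ 2)
            ≤ Real.sqrt (∑ ij : Fin n × Fin n,
                (1 / 4 : ℝ) * ‖(tensorCLM (ContinuousLinearMap.id ℂ (ES (Fin k)))
                    (S.W ε - S.W (flipAt ε ij))) S.φ‖ ^ 2)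
              + C / n := by
  refine ⟨1, one_pos, fun n k k' r _ _ _ _ S ε => ?_⟩
  set b : Fin n × Fin n → ℝ := fun p =>
    2⁻¹ * ‖tensorCLM (.id ℂ (ES (Fin k))) (S.W ε - S.W (flipAt ε p)) S.φ‖
  calc √(∑ p, Nnorm ((2 : ℂ)⁻¹ • (PhiII S ε - PhiII S (flipAt ε p))) ^ 2)
      ≤ √(∑ p, (b p + ((n : ℝ) ^ 2)⁻¹) ^ 2) :=
        Real.sqrt_le_sqrt <| Finset.sum_le_sum fun p _ => pow_le_pow_left₀ (Nnorm_nonneg _)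
          (S.Nnorm_half_PhiII_sub_flipAt_le ε p) 2
    _ ≤ √(∑ p, b p ^ 2) + √(∑ _ : Fin n × Fin n, (((n : ℝ) ^ 2)⁻¹) ^ 2) :=
        sqrt_sum_sq_add_le _ _
    _ = _ := by
        rw [sqrt_sum_inv_sq_sq]
        simp only [b, mul_pow]
        norm_num
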